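/- Let g be a non-abelian complex Lie algebra and ω̄¹,…,ω̄^m a basis of the annihilator of [g,g] (conjugated). Suppose some ω̄^i ∧ ω̄^j (i < j) does not lie in a given subspace B ⊆ Λ²ḡ*. Then there exists a choice of scalars t with Φ₁ = Σ t_p^q ω̄^p ⊗ X_q such that [Φ₁, Φ₁] ∉ B ⊗ g; specifically, choosing k < l with [X_k, X_l] ≠ 0 and t supported on indices {i,j} × {k,l} with nonzero 2×2 determinant yields [Φ₁,Φ₁] = 2·det·ω̄^i ∧ ω̄^j ⊗ [X_k,X_l] ≠ 0 in (Λ²ḡ*/B) ⊗ g. -/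

import Mathlib

/-- The wedge `α ∧ β` of two linear functionals, as a bilinear form. -/
noncomputable def wedgeDual (g : Type*) [LieRing g] [LieAlgebra ℂ g]
    (α β : Module.Dual ℂ g) : g →ₗ[ℂ] g →ₗ[ℂ] ℂ :=
  α.smulRight β - β.smulRight α

/-- The `k`-th term of the lower central series, as a submodule. -/
noncomputable def lcsSub (g : Type*) [LieRing g] [LieAlgebra ℂ g] (k : ℕ) : Submodule ℂ g :=
  LieSubmodule.toSubmodule (LieModule.lowerCentralSeries ℂ g g k)

/-!
Pick basis vectors `X_k, X_l` with `⁅X_k, X_l⁆ ≠ 0` (they exist since `g` is non-abelian) and let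
`Φ₁ = ω̄^i ⊗ X_k + ω̄^j ⊗ X_l`, so that `Φ₁(u) = ω̄^i(u) X_k + ω̄^j(u) X_l`. Bilinearity and
antisymmetry of the bracket give `[Φ₁, Φ₁](u, v) = 2 (ω̄^i ∧ ω̄^j)(u, v) ⁅X_k, X_l⁆`. To see that
`W ⊗ Z` with `W ∉ B`, `Z ≠ 0` is not in `B ⊗ g`, contract the `g`-factor with a functional `φ`
such that `φ Z ≠ 0`: this maps `B ⊗ g` into `B` and `W ⊗ Z` to `φ(Z) W ∉ B`.
-/

section Bracket

variable {R L : Type*} [CommRing R] [LieRing L] [LieAlgebra R L]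

lemma exists_lt_lie_basis_ne_zero {ι : Type*} [LinearOrder ι] (X : Module.Basis ι R L)
    (hna : ¬IsLieAbelian L) : ∃ k l, k < l ∧ ⁅X k, X l⁆ ≠ 0 := by
  contrapose! hna
  have hX : ∀ k l, ⁅X k, X l⁆ = 0 := by
    intro k l
    rcases lt_trichotomy k l with hkl | rfl | hkl
    · exact hna k l hkl
    · exact lie_self _
    · rw [← lie_skew, hna l k hkl, neg_zero]
  have hbracket : (LieModule.toEnd R L L : L →ₗ[R] L →ₗ[R] L) = 0 :=
    LinearMap.ext_basis X X fun k l => by simpa using hX k l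
  exact ⟨fun x y => by simpa using LinearMap.congr_fun₂ hbracket x y⟩

lemma lie_smul_add_smul (a b c d : R) (x y : L) :
    ⁅a • x + b • y, c • x + d • y⁆ = (a * d - b * c) • ⁅x, y⁆ := by
  simp only [add_lie, lie_add, smul_lie, lie_smul, lie_self, smul_zero, add_zero, zero_add,
    ← lie_skew y x]
  module

lemma lie_sub_lie_swap (x y : L) : ⁅x, y⁆ - ⁅y, x⁆ = (2 : R) • ⁅x, y⁆ := by
  rw [← lie_skew y x, sub_neg_eq_add, two_smul]

end Bracket

lemma sum_sum_single_add_single_mul_smul {R M ι κ : Type*} [CommSemiring R] [AddCommMonoid M]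
    [Module R M] [Fintype ι] [Fintype κ] [DecidableEq ι] [DecidableEq κ]
    (i j : ι) (k l : κ) (a : ι → R) (v : κ → M) :
    ∑ p, ∑ q, ((Pi.single i (Pi.single k 1) + Pi.single j (Pi.single l 1) : ι → κ → R) p q
      * a p) • v q = a i • v k + a j • v l := by
  simp only [Pi.add_apply, Pi.single_apply, ite_apply, Pi.zero_apply, add_mul, ite_mul, one_mul,
    zero_mul, add_smul, ite_smul, zero_smul, Finset.sum_add_distrib, Finset.sum_ite_irrel,
    Finset.sum_ite_eq', Finset.mem_univ, if_true, Finset.sum_const_zero]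

section TensorBilinear

variable {K V V' M : Type*} [Field K] [AddCommGroup V] [Module K V] [AddCommGroup V']
  [Module K V'] [AddCommGroup M] [Module K M]

lemma compr₂_mem_of_mem_span_compr₂_toSpanSingleton {B : Submodule K (V →ₗ[K] V' →ₗ[K] K)}
    {F : V →ₗ[K] V' →ₗ[K] M}
    (hF : F ∈ Submodule.span K {F : V →ₗ[K] V' →ₗ[K] M | ∃ b ∈ B, ∃ Z : M,
      F = b.compr₂ (LinearMap.toSpanSingleton K M Z)})
    (φ : Module.Dual K M) : F.compr₂ φ ∈ B := by
  suffices hle : Submodule.span K {F : V →ₗ[K] V' →ₗ[K] M | ∃ b ∈ B, ∃ Z : M,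
      F = b.compr₂ (LinearMap.toSpanSingleton K M Z)} ≤
      B.comap (LinearMap.compRight K (LinearMap.compRight K φ)) from hle hF
  rw [Submodule.span_le]
  rintro _ ⟨b, hb, Z, rfl⟩
  change (LinearMap.compRight K φ).comp (b.compr₂ _) ∈ B
  convert B.smul_mem (φ Z) hb using 1
  ext u v
  simp [mul_comm]

lemma smul_compr₂_toSpanSingleton_notMem_span {B : Submodule K (V →ₗ[K] V' →ₗ[K] K)}
    {W : V →ₗ[K] V' →ₗ[K] K} (hW : W ∉ B) {Z : M} (hZ : Z ≠ 0) {c : K} (hc : c ≠ 0) :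
    c • W.compr₂ (LinearMap.toSpanSingleton K M Z) ∉
      Submodule.span K {F : V →ₗ[K] V' →ₗ[K] M | ∃ b ∈ B, ∃ Z' : M,
        F = b.compr₂ (LinearMap.toSpanSingleton K M Z')} := by
  intro hmem
  obtain ⟨φ, hφ⟩ : ∃ φ : Module.Dual K M, φ Z ≠ 0 := by
    by_contra! h
    exact hZ ((Module.forall_dual_apply_eq_zero_iff K Z).mp h)
  have hcontract : (c • W.compr₂ (LinearMap.toSpanSingleton K M Z)).compr₂ φ = (c * φ Z) • W := by
    ext u v
    simp only [LinearMap.compr₂_apply, LinearMap.smul_apply, LinearMap.toSpanSingleton_apply,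
      map_smul, smul_eq_mul]
    ring
  have hB := compr₂_mem_of_mem_span_compr₂_toSpanSingleton hmem φ
  rw [hcontract] at hB
  exact hW ((B.smul_mem_iff (mul_ne_zero hc hφ)).mp hB)

end TensorBilinear

theorem stmt15_general (g : Type*) [LieRing g] [LieAlgebra ℂ g]
    (hna : ¬IsLieAbelian g) (m n : ℕ) (X : Module.Basis (Fin n) ℂ g)
    (ω : Fin m → Module.Dual ℂ g)
    (B : Submodule ℂ (g →ₗ[ℂ] g →ₗ[ℂ] ℂ))
    (i j : Fin m) (hij : i < j) (hW : wedgeDual g (ω i) (ω j) ∉ B) :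
    ∃ (t : Fin m → Fin n → ℂ) (k l : Fin n), k < l ∧
      (∀ p q, ((p ≠ i ∧ p ≠ j) ∨ (q ≠ k ∧ q ≠ l)) → t p q = 0) ∧
      t i k * t j l - t j k * t i l ≠ 0 ∧
      ⁅X k, X l⁆ ≠ 0 ∧
      (∀ u v : g,
        ⁅∑ p : Fin m, ∑ q : Fin n, (t p q * ω p u) • X q,
         ∑ p : Fin m, ∑ q : Fin n, (t p q * ω p v) • X q⁆
        - ⁅∑ p : Fin m, ∑ q : Fin n, (t p q * ω p v) • X q,
           ∑ p : Fin m, ∑ q : Fin n, (t p q * ω p u) • X q⁆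
        = ((2 * (t i k * t j l - t j k * t i l)) * wedgeDual g (ω i) (ω j) u v) • ⁅X k, X l⁆) ∧
      (2 * (t i k * t j l - t j k * t i l)) •
          (wedgeDual g (ω i) (ω j)).compr₂ (LinearMap.toSpanSingleton ℂ g ⁅X k, X l⁆) ∉
        Submodule.span ℂ {F : g →ₗ[ℂ] g →ₗ[ℂ] g | ∃ b ∈ B, ∃ Z : g,
          F = b.compr₂ (LinearMap.toSpanSingleton ℂ g Z)} := by
  obtain ⟨k, l, hkl, hZ⟩ := exists_lt_lie_basis_ne_zero X hna
  set t : Fin m → Fin n → ℂ := Pi.single i (Pi.single k 1) + Pi.single j (Pi.single l 1)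
  have hdet : t i k * t j l - t j k * t i l = 1 := by
    simp [t, hij.ne, hij.ne', hkl.ne, hkl.ne']
  refine ⟨t, k, l, hkl, ?_, by simp [hdet], hZ, fun u v => ?_, ?_⟩
  · rintro p q (⟨hpi, hpj⟩ | ⟨hqk, hql⟩) <;> simp [t, Pi.single_apply, ite_apply, *]
  · rw [sum_sum_single_add_single_mul_smul, sum_sum_single_add_single_mul_smul,
      lie_sub_lie_swap (R := ℂ), lie_smul_add_smul, hdet, smul_smul]
    simp [wedgeDual]
  · rw [hdet, mul_one]
    exact smul_compr₂_toSpanSingleton_notMem_span hW hZ two_ne_zero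

/-- Let `g` be non-abelian with basis `X₁,…,Xₙ`, let `ω̄¹,…,ω̄^m` be a basis of
the annihilator of `[g,g]`, and let `B ⊆ Λ²ḡ*` (realised as bilinear forms) be a subspace
with `ω̄^i ∧ ω̄^j ∉ B` for some `i < j`. Then there are coefficients `t`, supported on
`{i,j} × {k,l}` for some `k < l` with `⁅X_k, X_l⁆ ≠ 0` and with nonzero `2×2`-determinant,
such that for `Φ₁ = Σ t_p^q ω̄^p ⊗ X_q` one has
`[Φ₁,Φ₁] = 2·det·ω̄^i∧ω̄^j ⊗ ⁅X_k,X_l⁆ ∉ B ⊗ g`. -/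
theorem stmt15 (g : Type*) [LieRing g] [LieAlgebra ℂ g] [FiniteDimensional ℂ g]
    (hna : ¬IsLieAbelian g) (m n : ℕ) (X : Module.Basis (Fin n) ℂ g)
    (ω : Fin m → Module.Dual ℂ g)
    (hω : LinearIndependent ℂ ω)
    (hωspan : Submodule.span ℂ (Set.range ω) = Submodule.dualAnnihilator (lcsSub g 1))
    (B : Submodule ℂ (g →ₗ[ℂ] g →ₗ[ℂ] ℂ))
    (i j : Fin m) (hij : i < j) (hW : wedgeDual g (ω i) (ω j) ∉ B) :
    ∃ (t : Fin m → Fin n → ℂ) (k l : Fin n), k < l ∧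
      (∀ p q, ((p ≠ i ∧ p ≠ j) ∨ (q ≠ k ∧ q ≠ l)) → t p q = 0) ∧
      t i k * t j l - t j k * t i l ≠ 0 ∧
      ⁅X k, X l⁆ ≠ 0 ∧
      (∀ u v : g,
        ⁅∑ p : Fin m, ∑ q : Fin n, (t p q * ω p u) • X q,
         ∑ p : Fin m, ∑ q : Fin n, (t p q * ω p v) • X q⁆
        - ⁅∑ p : Fin m, ∑ q : Fin n, (t p q * ω p v) • X q,
           ∑ p : Fin m, ∑ q : Fin n, (t p q * ω p u) • X q⁆
        = ((2 * (t i k * t j l - t j k * t i l)) * wedgeDual g (ω i) (ω j) u v) • ⁅X k, X l⁆) ∧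
      (2 * (t i k * t j l - t j k * t i l)) •
          (wedgeDual g (ω i) (ω j)).compr₂ (LinearMap.toSpanSingleton ℂ g ⁅X k, X l⁆) ∉
        Submodule.span ℂ {F : g →ₗ[ℂ] g →ₗ[ℂ] g | ∃ b ∈ B, ∃ Z : g,
          F = b.compr₂ (LinearMap.toSpanSingleton ℂ g Z)} :=
  stmt15_general g hna m n X ω B i j hij hW
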